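/- For the N network with workload t(a)=1, t(b)=2, t(c)=2, t(d)=1, every series-parallel extension has makespan at least 4, while T(N)=3; hence the minimal achievable slowdown over all SP extensions is exactly 4/3, showing the 4/3 bound is tight. -/

import Mathlib

/-- A finset is a chain w.r.t. relation `E`: any two distinct members are comparable. -/
def IsChainIn {V : Type*} (E : V → V → Prop) (C : Finset V) : Prop :=
  ∀ a ∈ C, ∀ b ∈ C, a ≠ b → E a b ∨ E b a

/-- Makespan: supremum over chains of total duration. -/
noncomputable def makespan {V : Type*} [Fintype V] [DecidableEq V]
    (E : V → V → Prop) (t : V → ℝ) : ℝ :=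
  sSup {x | ∃ C : Finset V, IsChainIn E C ∧ x = ∑ a ∈ C, t a}

/-- Level of an activity: maximum size of a chain ending at `a`. -/
noncomputable def level {V : Type*} [Fintype V] [DecidableEq V]
    (E : V → V → Prop) (a : V) : ℕ :=
  sSup {n | ∃ C : Finset V, IsChainIn E C ∧ a ∈ C ∧ (∀ b ∈ C, b ≠ a → E b a) ∧ C.card = n}

/-- Depth: size of a longest chain. -/
noncomputable def depth {V : Type*} [Fintype V] [DecidableEq V]
    (E : V → V → Prop) : ℕ :=
  sSup {n | ∃ C : Finset V, IsChainIn E C ∧ C.card = n}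

/-- An induced N: four distinct elements a,b,c,d with a<c, a<d, b<d and
a,b incomparable, c,d incomparable, b,c incomparable. -/
def HasInducedN {V : Type*} (E : V → V → Prop) : Prop :=
  ∃ a b c d : V, a ≠ b ∧ a ≠ c ∧ a ≠ d ∧ b ≠ c ∧ b ≠ d ∧ c ≠ d ∧
    E a c ∧ E a d ∧ E b d ∧
    ¬ E a b ∧ ¬ E b a ∧ ¬ E c d ∧ ¬ E d c ∧ ¬ E b c ∧ ¬ E c b

/-- The N network on four activities a=0, b=1, c=2, d=3, with precedence
constraints (a,c), (a,d), (b,d). -/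
def NEdge : Fin 4 → Fin 4 → Prop := fun x y =>
  (x = 0 ∧ y = 2) ∨ (x = 0 ∧ y = 3) ∨ (x = 1 ∧ y = 3)

/-!
Any extension of the N network without an induced N makes one of the pairs `a b`, `c d`, `b c`
comparable, so it contains one of the chains `a b d`, `a c d`, `b c`; with workload `(1, 2, 2, 1)`
each of these weighs 4. The longest chains of N itself weigh 3, and adding the edge `(a, b)`
gives an N-free extension whose longest chain `a b d` weighs exactly 4.
-/

open Finset

instance {V : Type*} [DecidableEq V] (E : V → V → Prop) [DecidableRel E] (C : Finset V) :
    Decidable (IsChainIn E C) :=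
  inferInstanceAs (Decidable (∀ a ∈ C, ∀ b ∈ C, a ≠ b → E a b ∨ E b a))

theorem isChainIn_empty {V : Type*} (E : V → V → Prop) : IsChainIn E ∅ := by
  simp [IsChainIn]

section Chains

variable {V : Type*} [DecidableEq V] {E : V → V → Prop}

theorem isChainIn_pair {x y : V} (hxy : E x y ∨ E y x) : IsChainIn E {x, y} := by
  intro u hu v hv huv
  simp only [mem_insert, mem_singleton] at hu hv
  rcases hu with rfl | rfl <;> rcases hv with rfl | rfl <;> tauto

theorem isChainIn_triple {x y z : V} (hxy : E x y ∨ E y x) (hxz : E x z ∨ E z x)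
    (hyz : E y z ∨ E z y) : IsChainIn E {x, y, z} := by
  intro u hu v hv huv
  simp only [mem_insert, mem_singleton] at hu hv
  rcases hu with rfl | rfl | rfl <;> rcases hv with rfl | rfl | rfl <;> tauto

/-- In the paper's terms: every N-free extension contains one of the minimal SP extensions
`K`, `V`, `X`, witnessed by the chains `a b d`, `a c d`, `b c`. -/
theorem isChainIn_of_not_hasInducedN {a b c d : V} (hab : a ≠ b) (hac : a ≠ c) (had : a ≠ d)
    (hbc : b ≠ c) (hbd : b ≠ d) (hcd : c ≠ d) (hEac : E a c) (hEad : E a d) (hEbd : E b d)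
    (hN : ¬ HasInducedN E) :
    IsChainIn E {a, b, d} ∨ IsChainIn E {a, c, d} ∨ IsChainIn E {b, c} := by
  by_cases hEab : E a b ∨ E b a
  · exact .inl (isChainIn_triple hEab (.inl hEad) (.inl hEbd))
  by_cases hEcd : E c d ∨ E d c
  · exact .inr (.inl (isChainIn_triple (.inl hEac) (.inl hEad) hEcd))
  by_cases hEbc : E b c ∨ E c b
  · exact .inr (.inr (isChainIn_pair hEbc))
  push Not at hEab hEcd hEbc
  exact absurd ⟨a, b, c, d, hab, hac, had, hbc, hbd, hcd, hEac, hEad, hEbd, hEab.1, hEab.2,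
    hEcd.1, hEcd.2, hEbc.1, hEbc.2⟩ hN

end Chains

section Makespan

variable {V : Type*} [Fintype V] {E : V → V → Prop} {t : V → ℝ}

theorem bddAbove_chain_sums :
    BddAbove {x | ∃ C : Finset V, IsChainIn E C ∧ x = ∑ a ∈ C, t a} := by
  refine ⟨∑ a, |t a|, ?_⟩
  rintro _ ⟨C, -, rfl⟩
  exact (sum_le_sum fun a _ => le_abs_self (t a)).trans
    (sum_le_univ_sum_of_nonneg fun a => abs_nonneg (t a))

variable [DecidableEq V]

theorem sum_le_makespan {C : Finset V} (hC : IsChainIn E C) :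
    ∑ a ∈ C, t a ≤ makespan E t :=
  le_csSup bddAbove_chain_sums ⟨C, hC, rfl⟩

theorem makespan_le {r : ℝ} (h : ∀ C, IsChainIn E C → ∑ a ∈ C, t a ≤ r) :
    makespan E t ≤ r :=
  csSup_le ⟨_, ∅, isChainIn_empty E, rfl⟩ (by rintro _ ⟨C, hC, rfl⟩; exact h C hC)

theorem makespan_le_of_forall_subset (ht : 0 ≤ t) {r : ℝ}
    (h : ∀ C, IsChainIn E C → ∃ D, C ⊆ D ∧ ∑ a ∈ D, t a ≤ r) : makespan E t ≤ r :=
  makespan_le fun C hC =>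
    let ⟨_, hCD, hD⟩ := h C hC
    (sum_le_sum_of_subset_of_nonneg hCD fun a _ _ => ht a).trans hD

end Makespan

section NNetwork

instance : DecidableRel NEdge := fun x y =>
  inferInstanceAs (Decidable ((x = 0 ∧ y = 2) ∨ (x = 0 ∧ y = 3) ∨ (x = 1 ∧ y = 3)))

/-- The minimal SP extension `K` of the paper: N together with the edge `(a, b)`. -/
def NEdgeK (x y : Fin 4) : Prop := NEdge x y ∨ x = 0 ∧ y = 1

instance : DecidableRel NEdgeK := fun x y =>
  inferInstanceAs (Decidable (NEdge x y ∨ x = 0 ∧ y = 1))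

theorem NEdge_chain_subset :
    ∀ C : Finset (Fin 4), IsChainIn NEdge C →
      C ⊆ {0, 2} ∨ C ⊆ {0, 3} ∨ C ⊆ {1, 3} := by
  decide

theorem NEdgeK_chain_subset :
    ∀ C : Finset (Fin 4), IsChainIn NEdgeK C → C ⊆ {0, 1, 3} ∨ C ⊆ {0, 2} := by
  decide

theorem workload_nonneg : 0 ≤ (![1, 2, 2, 1] : Fin 4 → ℝ) := by
  intro i; fin_cases i <;> norm_num

theorem four_le_makespan_of_not_hasInducedN {E : Fin 4 → Fin 4 → Prop}
    (hExt : ∀ a b, NEdge a b → E a b) (hN : ¬ HasInducedN E) :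
    4 ≤ makespan E ![1, 2, 2, 1] := by
  have hchain := isChainIn_of_not_hasInducedN (by decide) (by decide) (by decide) (by decide)
    (by decide) (by decide) (hExt 0 2 (by decide)) (hExt 0 3 (by decide))
    (hExt 1 3 (by decide)) hN
  rcases hchain with h | h | h <;> refine le_of_eq_of_le ?_ (sum_le_makespan h) <;>
    (simp; norm_num)

theorem makespan_NEdge : makespan NEdge ![1, 2, 2, 1] = 3 := by
  refine le_antisymm (makespan_le_of_forall_subset workload_nonneg fun C hC => ?_) ?_
  · rcases NEdge_chain_subset C hC with h | h | h <;> refine ⟨_, h, ?_⟩ <;> (simp; norm_num)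
  · refine le_of_eq_of_le ?_ (sum_le_makespan (show IsChainIn NEdge {0, 2} by decide))
    simp; norm_num

theorem makespan_NEdgeK : makespan NEdgeK ![1, 2, 2, 1] = 4 := by
  refine le_antisymm (makespan_le_of_forall_subset workload_nonneg fun C hC => ?_) ?_
  · rcases NEdgeK_chain_subset C hC with h | h <;> refine ⟨_, h, ?_⟩ <;> (simp; norm_num)
  · refine le_of_eq_of_le ?_ (sum_le_makespan (show IsChainIn NEdgeK {0, 1, 3} by decide))
    simp; norm_num

theorem NEdgeK_isNFreeExtension :
    Transitive NEdgeK ∧ Irreflexive NEdgeK ∧ (∀ a b, NEdge a b → NEdgeK a b) ∧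
      ¬ HasInducedN NEdgeK := by
  unfold Transitive Irreflexive HasInducedN
  decide

end NNetwork

/-- with workload t(a)=1, t(b)=2, t(c)=2, t(d)=1, every
series-parallel (N-free) extension of the N network has makespan at least 4,
T(N) = 3, and some SP extension achieves makespan exactly 4; hence the minimal
achievable slowdown is exactly 4/3. -/
theorem N_four_thirds_tight :
    (∀ E' : Fin 4 → Fin 4 → Prop, Transitive E' → Irreflexive E' →
        (∀ a b, NEdge a b → E' a b) → ¬ HasInducedN E' →
        4 ≤ makespan E' ![1, 2, 2, 1]) ∧
      makespan NEdge ![1, 2, 2, 1] = 3 ∧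
      (∃ E' : Fin 4 → Fin 4 → Prop, Transitive E' ∧ Irreflexive E' ∧
        (∀ a b, NEdge a b → E' a b) ∧ ¬ HasInducedN E' ∧
        makespan E' ![1, 2, 2, 1] = 4) := by
  obtain ⟨hTrans, hIrrefl, hExt, hNFree⟩ := NEdgeK_isNFreeExtension
  exact ⟨fun _ _ _ => four_le_makespan_of_not_hasInducedN, makespan_NEdge,
    NEdgeK, hTrans, hIrrefl, hExt, hNFree, makespan_NEdgeK⟩
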